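/- arXiv:1907.05727 — 4 statements merged into one kernel-verified Lean document; each statement's English description precedes it below -/
import Mathlib

section
/- Let H be a real Hilbert space and K : H → H a compact self-adjoint linear operator. Define the energy E(x) = ⟨x,x⟩ and the helicity 𝓗(x) = ⟨x, K x⟩. Then for every h ∈ ℝ for which the constraint set {x ∈ H : 𝓗(x) = h} is nonempty, the minimisation problem E(x) → min subject to 𝓗(x) = h admits a global minimiser. -/
/-!
For `h > 0` the problem reduces to the top `c = sup {⟪x, K x⟫ : ‖x‖ = 1}` of the numerical range
of `K`, which satisfies `⟪y, K y⟫ ≤ c ‖y‖²`. If `c > 0` it is an eigenvalue: along a maximising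
sequence of unit vectors `v n`, the positive operator `S = c - K` has `⟪v n, S v n⟫ → 0`, hence
`S v n → 0` by the Cauchy–Schwarz inequality for `S`; compactness makes a subsequence of `K v n`
converge, so `c • v n = S v n + K v n` converges along it too, to `c • e` with `‖e‖ = 1` and
`K e = c • e`. Then `√(h / c) • e` is a minimiser, because every `y` in the constraint set has
`h ≤ c ‖y‖²`. The case `h < 0` follows by passing to `-K`, and for `h = 0` the minimiser is `0`.
-/

open RealInnerProductSpace Filter Topology Metric

theorem IsCompactOperator.exists_tendsto_subseq {𝕜 E F : Type*} [NontriviallyNormedField 𝕜]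
    [SeminormedAddCommGroup E] [NormedSpace 𝕜 E] [NormedAddCommGroup F] [NormedSpace 𝕜 F]
    {f : E →L[𝕜] F} (hf : IsCompactOperator f) {v : ℕ → E} {r : ℝ} (hv : ∀ n, ‖v n‖ ≤ r) :
    ∃ (y : F) (φ : ℕ → ℕ), StrictMono φ ∧ Tendsto (fun n ↦ f (v (φ n))) atTop (𝓝 y) := by
  obtain ⟨M, hM, hfM⟩ := hf.image_closedBall_subset_compact r
  obtain ⟨y, -, φ, hφ, hy⟩ :=
    hM.tendsto_subseq fun n ↦ hfM ⟨v n, mem_closedBall_zero_iff.2 (hv n), rfl⟩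
  exact ⟨y, φ, hφ, hy⟩

section

variable {H : Type*} [NormedAddCommGroup H] [InnerProductSpace ℝ H]

namespace ContinuousLinearMap

theorem IsPositive.norm_apply_sq_le {S : H →L[ℝ] H} (hS : S.IsPositive) (x : H) :
    ‖S x‖ ^ 2 ≤ ‖S‖ * ⟪x, S x⟫ := by
  have hCS := LinearMap.BilinForm.apply_mul_apply_le_of_forall_zero_le
    ((innerₗ H).compl₂ (S : H →ₗ[ℝ] H)) hS.inner_nonneg_right x (S x)
  have hx_SSx : ⟪x, S (S x)⟫ = ‖S x‖ ^ 2 := by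
    rw [← hS.inner_left_eq_inner_right, real_inner_self_eq_norm_sq]
  have hSx_SSx : ⟪S x, S (S x)⟫ ≤ ‖S‖ * ‖S x‖ ^ 2 :=
    calc ⟪S x, S (S x)⟫ ≤ ‖S x‖ * ‖S (S x)‖ := real_inner_le_norm _ _
      _ ≤ ‖S x‖ * (‖S‖ * ‖S x‖) := by gcongr; exact S.le_opNorm _
      _ = ‖S‖ * ‖S x‖ ^ 2 := by ring
  simp only [LinearMap.compl₂_apply, innerₗ_apply_apply, coe_coe, real_inner_self_eq_norm_sq,
    hx_SSx] at hCS
  rcases (norm_nonneg (S x)).eq_or_lt with hzero | hpos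
  · rw [← hzero]; simpa using mul_nonneg (norm_nonneg S) (hS.inner_nonneg_right x)
  · nlinarith [mul_le_mul_of_nonneg_left hSx_SSx (hS.inner_nonneg_right x), pow_pos hpos 2]

theorem IsPositive.tendsto_apply_of_tendsto_inner {S : H →L[ℝ] H} (hS : S.IsPositive) {ι : Type*}
    {l : Filter ι} {v : ι → H} (hv : Tendsto (fun i ↦ ⟪v i, S (v i)⟫) l (𝓝 0)) :
    Tendsto (fun i ↦ S (v i)) l (𝓝 0) := by
  have hsq : Tendsto (fun i ↦ ‖S (v i)‖ ^ 2) l (𝓝 0) :=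
    squeeze_zero (fun _ ↦ by positivity) (fun i ↦ hS.norm_apply_sq_le (v i))
      (by simpa using hv.const_mul ‖S‖)
  rw [tendsto_zero_iff_norm_tendsto_zero]
  simpa using hsq.sqrt

theorem inner_map_self_le_of_forall_sphere {K : H →L[ℝ] H} {c : ℝ}
    (h : ∀ x ∈ sphere (0 : H) 1, ⟪x, K x⟫ ≤ c) (y : H) : ⟪y, K y⟫ ≤ c * ‖y‖ ^ 2 := by
  rcases eq_or_ne y 0 with rfl | hy
  · simp
  have hy' : 0 < ‖y‖ := norm_pos_iff.2 hy
  have hunit := h (‖y‖⁻¹ • y) (by simp [norm_smul, hy'.ne'])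
  rw [map_smul, real_inner_smul_left, real_inner_smul_right, ← mul_assoc, ← sq,
    inv_pow, inv_mul_le_iff₀ (by positivity)] at hunit
  linarith

end ContinuousLinearMap

namespace IsCompactOperator

theorem exists_unit_eigenvector_of_tendsto {K : H →L[ℝ] H}
    (hKc : IsCompactOperator K) (hK : K.IsSymmetric) {c : ℝ} (hc : c ≠ 0)
    (hle : ∀ x, ⟪x, K x⟫ ≤ c * ‖x‖ ^ 2) {v : ℕ → H} (hv : ∀ n, ‖v n‖ = 1)
    (hlim : Tendsto (fun n ↦ ⟪v n, K (v n)⟫) atTop (𝓝 c)) :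
    ∃ e, ‖e‖ = 1 ∧ K e = c • e := by
  set S := c • ContinuousLinearMap.id ℝ H - K
  have hSapply (x : H) : S x = c • x - K x := rfl
  have hSinner (x : H) : ⟪x, S x⟫ = c * ‖x‖ ^ 2 - ⟪x, K x⟫ := by
    rw [hSapply, inner_sub_right, real_inner_smul_right, real_inner_self_eq_norm_sq]
  have hS : S.IsPositive := by
    refine (ContinuousLinearMap.isPositive_iff S).2 ⟨fun x y ↦ ?_, fun x ↦ ?_⟩
    · simp only [ContinuousLinearMap.coe_coe, hSapply, inner_sub_left, inner_sub_right,
        real_inner_smul_left, real_inner_smul_right]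
      exact congrArg _ (hK x y)
    · rw [real_inner_comm, hSinner]; linarith [hle x]
  have hSv : Tendsto (fun n ↦ S (v n)) atTop (𝓝 0) := by
    refine hS.tendsto_apply_of_tendsto_inner ?_
    simpa [hSinner, hv] using (tendsto_const_nhds (x := c)).sub hlim
  obtain ⟨y, φ, hφ, hy⟩ := hKc.exists_tendsto_subseq fun n ↦ (hv n).le
  have hcv : Tendsto (fun n ↦ c • v (φ n)) atTop (𝓝 y) := by
    simpa [hSapply] using (hSv.comp hφ.tendsto_atTop).add hy
  have hve : Tendsto (fun n ↦ v (φ n)) atTop (𝓝 (c⁻¹ • y)) := by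
    simpa [smul_smul, hc] using hcv.const_smul c⁻¹
  refine ⟨c⁻¹ • y, tendsto_nhds_unique hve.norm (by simp [hv]), ?_⟩
  rw [tendsto_nhds_unique ((K.continuous.tendsto _).comp hve) hy, smul_smul,
    mul_inv_cancel₀ hc, one_smul]

theorem exists_eigenvector_forall_inner_le {K : H →L[ℝ] H}
    (hKc : IsCompactOperator K) (hK : K.IsSymmetric) (hpos : ∃ x, 0 < ⟪x, K x⟫) :
    ∃ (e : H) (c : ℝ), ‖e‖ = 1 ∧ K e = c • e ∧ 0 < c ∧ ∀ y, ⟪y, K y⟫ ≤ c * ‖y‖ ^ 2 := by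
  obtain ⟨x, hx⟩ := hpos
  have : Nontrivial H := nontrivial_of_ne x 0 (by rintro rfl; simp at hx)
  set A := (fun x ↦ ⟪x, K x⟫) '' sphere (0 : H) 1
  have hbdd : BddAbove A := by
    refine ⟨‖K‖, ?_⟩
    rintro _ ⟨z, hz, rfl⟩
    rw [mem_sphere_zero_iff_norm] at hz
    simpa [hz] using (real_inner_le_norm z (K z)).trans
      (mul_le_mul_of_nonneg_left (K.le_opNorm z) (norm_nonneg z))
  have hle := K.inner_map_self_le_of_forall_sphere fun z hz ↦ le_csSup hbdd ⟨z, hz, rfl⟩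
  have hc : 0 < sSup A := pos_of_mul_pos_left (hx.trans_le (hle x)) (by positivity)
  obtain ⟨u, -, hu, huA⟩ :=
    exists_seq_tendsto_sSup ((NormedSpace.sphere_nonempty.2 zero_le_one).image _) hbdd
  choose v hv hvu using huA
  obtain ⟨e, he, hKe⟩ := hKc.exists_unit_eigenvector_of_tendsto hK hc.ne' hle
    (fun n ↦ by simpa using hv n) (by simpa [hvu] using hu)
  exact ⟨e, sSup A, he, hKe, hc, hle⟩

theorem exists_min_norm_of_inner_self_eq {K : H →L[ℝ] H}
    (hKc : IsCompactOperator K) (hK : K.IsSymmetric) (hpos : ∃ x, 0 < ⟪x, K x⟫) {h : ℝ}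
    (hh : 0 < h) : ∃ x₀ : H, ⟪x₀, K x₀⟫ = h ∧ ∀ y : H, ⟪y, K y⟫ = h → ‖x₀‖ ^ 2 ≤ ‖y‖ ^ 2 := by
  obtain ⟨e, c, he, hKe, hc, hle⟩ := hKc.exists_eigenvector_forall_inner_le hK hpos
  have hnorm : ‖√(h / c) • e‖ ^ 2 = h / c := by
    rw [norm_smul, he, mul_one, Real.norm_of_nonneg (by positivity), Real.sq_sqrt (by positivity)]
  refine ⟨√(h / c) • e, ?_, fun y hy ↦ ?_⟩
  · rw [map_smul, hKe, smul_comm, real_inner_smul_right, real_inner_self_eq_norm_sq, hnorm]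
    field_simp
  · rw [hnorm, div_le_iff₀ hc]
    linarith [hle y]

end IsCompactOperator

end

/-- Existence of a global minimiser of the energy `E(x) = ‖x‖²` in every nonempty
helicity class `{x | ⟪x, K x⟫ = h}`, where `K` is a compact self-adjoint operator
on a real Hilbert space. -/
theorem energy_minimiser_exists {H : Type*} [NormedAddCommGroup H] [InnerProductSpace ℝ H]
    [CompleteSpace H] (K : H →L[ℝ] H) (hK : IsSelfAdjoint K) (hKc : IsCompactOperator K)
    (h : ℝ) (hne : ∃ x : H, ⟪x, K x⟫ = h) :
    ∃ x₀ : H, ⟪x₀, K x₀⟫ = h ∧ ∀ y : H, ⟪y, K y⟫ = h → ‖x₀‖ ^ 2 ≤ ‖y‖ ^ 2 := by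
  obtain ⟨x, hx⟩ := hne
  rcases lt_trichotomy h 0 with hneg | rfl | hpos
  · obtain ⟨x₀, hx₀, hmin⟩ := hKc.neg.exists_min_norm_of_inner_self_eq hK.neg.isSymmetric
      ⟨x, by simpa [inner_neg_right, hx] using hneg⟩ (neg_pos.2 hneg)
    refine ⟨x₀, by simpa [inner_neg_right] using hx₀, fun y hy ↦ hmin y ?_⟩
    simp [inner_neg_right, hy]
  · exact ⟨0, by simp, fun y _ ↦ by simp⟩
  · exact hKc.exists_min_norm_of_inner_self_eq hK.isSymmetric ⟨x, hx ▸ hpos⟩ hpos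
end

section
/- Let H be a real Hilbert space, K compact self-adjoint, with 𝓗(x) = ⟨x,Kx⟩ and E(x) = ‖x‖². Suppose for h₁ > 0 and h₂ > 0, x₁ and x₂ are respective global minimisers of E in the helicity classes h₁, h₂, satisfying x_i = λ_i K x_i with λ_i ≠ 0. Then λ₁ = λ₂; that is, the Lagrange multiplier of a global minimiser depends only on the sign of the helicity, not on its value. -/
/-!
Rescaling the eigenvector `x₁` by `√(h₂ / h₁)` moves it into the helicity class `h₂`, so the
minimality of `x₂` bounds the Rayleigh quotient `‖x₂‖² / h₂` by `‖x₁‖² / h₁`; by symmetry the two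
quotients agree. For an eigenvector `x = λ • K x` the Rayleigh quotient is exactly `λ`, because
`‖x‖² = ⟪x, λ • K x⟫ = λ ⟪x, K x⟫`.
-/

open RealInnerProductSpace

section

variable {H : Type*} [NormedAddCommGroup H] [InnerProductSpace ℝ H]

lemma inner_smul_apply_smul (K : H →ₗ[ℝ] H) (c : ℝ) (x : H) :
    ⟪c • x, K (c • x)⟫ = c ^ 2 * ⟪x, K x⟫ := by
  rw [map_smul, real_inner_smul_left, real_inner_smul_right, ← mul_assoc, sq]

lemma norm_sq_div_le_of_forall_norm_sq_le (K : H →ₗ[ℝ] H) {h h' : ℝ} {x₀ x : H} (hh : 0 < h)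
    (hh' : 0 < h') (hx : ⟪x, K x⟫ = h') (hmin : ∀ y : H, ⟪y, K y⟫ = h → ‖x₀‖ ^ 2 ≤ ‖y‖ ^ 2) :
    ‖x₀‖ ^ 2 / h ≤ ‖x‖ ^ 2 / h' := by
  set μ := √(h / h')
  have hμ : μ ^ 2 = h / h' := Real.sq_sqrt (by positivity)
  have hclass : ⟪μ • x, K (μ • x)⟫ = h := by
    rw [inner_smul_apply_smul, hμ, hx, div_mul_cancel₀ h hh'.ne']
  have hle : ‖x₀‖ ^ 2 ≤ h * (‖x‖ ^ 2 / h') := by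
    calc ‖x₀‖ ^ 2 ≤ ‖μ • x‖ ^ 2 := hmin _ hclass
      _ = h * (‖x‖ ^ 2 / h') := by
        rw [norm_smul, mul_pow, Real.norm_eq_abs, sq_abs, hμ]
        ring
  rwa [div_le_iff₀' hh]

lemma eq_norm_sq_div_of_eq_smul {K : H → H} {x : H} {h l : ℝ} (hx : ⟪x, K x⟫ = h) (hh : h ≠ 0)
    (he : x = l • K x) : l = ‖x‖ ^ 2 / h := by
  have hnorm : ‖x‖ ^ 2 = l * h := by
    calc ‖x‖ ^ 2 = ⟪x, x⟫ := (real_inner_self_eq_norm_sq x).symm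
      _ = ⟪x, l • K x⟫ := by rw [← he]
      _ = l * h := by rw [real_inner_smul_right, hx]
  rw [hnorm, mul_div_cancel_right₀ l hh]

end

theorem multiplier_depends_only_on_sign_general {H : Type*} [NormedAddCommGroup H]
    [InnerProductSpace ℝ H] (K : H →L[ℝ] H)
    (h₁ h₂ : ℝ) (hh₁ : 0 < h₁) (hh₂ : 0 < h₂)
    (x₁ x₂ : H) (l₁ l₂ : ℝ)
    (hx₁ : ⟪x₁, K x₁⟫ = h₁) (hmin₁ : ∀ y : H, ⟪y, K y⟫ = h₁ → ‖x₁‖ ^ 2 ≤ ‖y‖ ^ 2)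
    (he₁ : x₁ = l₁ • K x₁)
    (hx₂ : ⟪x₂, K x₂⟫ = h₂) (hmin₂ : ∀ y : H, ⟪y, K y⟫ = h₂ → ‖x₂‖ ^ 2 ≤ ‖y‖ ^ 2)
    (he₂ : x₂ = l₂ • K x₂) :
    l₁ = l₂ := by
  rw [eq_norm_sq_div_of_eq_smul hx₁ hh₁.ne' he₁, eq_norm_sq_div_of_eq_smul hx₂ hh₂.ne' he₂]
  exact le_antisymm
    (norm_sq_div_le_of_forall_norm_sq_le K.toLinearMap hh₁ hh₂ hx₂ hmin₁)
    (norm_sq_div_le_of_forall_norm_sq_le K.toLinearMap hh₂ hh₁ hx₁ hmin₂)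

/-- The Lagrange multiplier of a global minimiser depends only on the sign of the
helicity: global minimisers in any two positive helicity classes `h₁, h₂` with
eigenvalue relations `xᵢ = λᵢ • K xᵢ` (`λᵢ ≠ 0`) satisfy `λ₁ = λ₂`. -/
theorem multiplier_depends_only_on_sign {H : Type*} [NormedAddCommGroup H]
    [InnerProductSpace ℝ H] [CompleteSpace H] (K : H →L[ℝ] H) (hK : IsSelfAdjoint K)
    (hKc : IsCompactOperator K) (h₁ h₂ : ℝ) (hh₁ : 0 < h₁) (hh₂ : 0 < h₂)
    (x₁ x₂ : H) (l₁ l₂ : ℝ) (hl₁ : l₁ ≠ 0) (hl₂ : l₂ ≠ 0)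
    (hx₁ : ⟪x₁, K x₁⟫ = h₁) (hmin₁ : ∀ y : H, ⟪y, K y⟫ = h₁ → ‖x₁‖ ^ 2 ≤ ‖y‖ ^ 2)
    (he₁ : x₁ = l₁ • K x₁)
    (hx₂ : ⟪x₂, K x₂⟫ = h₂) (hmin₂ : ∀ y : H, ⟪y, K y⟫ = h₂ → ‖x₂‖ ^ 2 ≤ ‖y‖ ^ 2)
    (he₂ : x₂ = l₂ • K x₂) :
    l₁ = l₂ :=
  multiplier_depends_only_on_sign_general K h₁ h₂ hh₁ hh₂ x₁ x₂ l₁ l₂ hx₁ hmin₁ he₁ hx₂ hmin₂ he₂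
end

section
/- Let (M̄, g) be an oriented, compact Riemannian 3-manifold with boundary. The helicity 𝓗(ω) = (ω, ⋆Ω̃)_{L²} of ω ∈ Ω¹_n(M̄) is well-defined, i.e. independent of the choice of 2-form Ω̃ with δΩ̃ = ω: if δΩ̃ = δΩ = ω and n(Ω) = 0, then (ω, ⋆Ω̃)_{L²} = (ω, ⋆Ω)_{L²}. -/
theorem helicity_well_defined_general {Ω1 Ω2 bΩ2 : Type*}
    [AddCommGroup Ω1] [Module ℝ Ω1] [AddCommGroup Ω2] [Module ℝ Ω2]
    [AddCommGroup bΩ2] [Module ℝ bΩ2]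
    (d1 : Ω1 →ₗ[ℝ] Ω2) (δ2 : Ω2 →ₗ[ℝ] Ω1)
    (starA : Ω2 →ₗ[ℝ] Ω1) (starB : Ω1 →ₗ[ℝ] Ω2) (n2 : Ω2 →ₗ[ℝ] bΩ2)
    (inner1 : Ω1 →ₗ[ℝ] Ω1 →ₗ[ℝ] ℝ) (inner2 : Ω2 →ₗ[ℝ] Ω2 →ₗ[ℝ] ℝ)
    (green : ∀ (Ω : Ω2) (η : Ω1), n2 Ω = 0 → inner1 (δ2 Ω) η = inner2 Ω (d1 η))
    (hsd : ∀ Ξ : Ω2, d1 (starA Ξ) = starB (δ2 Ξ))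
    (ω : Ω1) (Ω Ωt : Ω2) (hΩ : δ2 Ω = ω) (hn : n2 Ω = 0) (hΩt : δ2 Ωt = ω) :
    inner1 ω (starA Ωt) = inner1 ω (starA Ω) := by
  -- Green's formula is applied to `Ω`, the potential with `n(Ω) = 0`, whatever `Ξ` is.
  have potential_indep : ∀ Ξ : Ω2, δ2 Ξ = ω → inner1 ω (starA Ξ) = inner2 Ω (starB ω) := by
    intro Ξ hΞ
    rw [← hΩ, green Ω _ hn, hsd, hΞ, hΩ]
  rw [potential_indep Ωt hΩt, potential_indep Ω hΩ]

/-- Well-definedness of helicity: for `ω ∈ Ω¹_n`, the value `(ω, ⋆Ω̃)_{L²}` does not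
depend on the choice of 2-form potential `Ω̃` with `δΩ̃ = ω`.  The de Rham data of an
oriented compact Riemannian 3-manifold with boundary is axiomatised; `green` is
Green's formula with vanishing boundary term when `n(Ω) = 0`, `hsd` records
`d(⋆Ξ) = ⋆(δΞ)` and `hStarAdj` that the Hodge star is an L² isometry. -/
theorem helicity_well_defined {Ω1 Ω2 bΩ2 : Type*}
    [AddCommGroup Ω1] [Module ℝ Ω1] [AddCommGroup Ω2] [Module ℝ Ω2]
    [AddCommGroup bΩ2] [Module ℝ bΩ2]
    (d1 : Ω1 →ₗ[ℝ] Ω2) (δ2 : Ω2 →ₗ[ℝ] Ω1)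
    (starA : Ω2 →ₗ[ℝ] Ω1) (starB : Ω1 →ₗ[ℝ] Ω2) (n2 : Ω2 →ₗ[ℝ] bΩ2)
    (inner1 : Ω1 →ₗ[ℝ] Ω1 →ₗ[ℝ] ℝ) (inner2 : Ω2 →ₗ[ℝ] Ω2 →ₗ[ℝ] ℝ)
    (green : ∀ (Ω : Ω2) (η : Ω1), n2 Ω = 0 → inner1 (δ2 Ω) η = inner2 Ω (d1 η))
    (hsd : ∀ Ξ : Ω2, d1 (starA Ξ) = starB (δ2 Ξ))
    (hStarAdj : ∀ (Ξ : Ω2) (z : Ω1), inner2 Ξ (starB z) = inner1 (starA Ξ) z)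
    (ω : Ω1) (Ω Ωt : Ω2) (hΩ : δ2 Ω = ω) (hn : n2 Ω = 0) (hΩt : δ2 Ωt = ω) :
    inner1 ω (starA Ωt) = inner1 ω (starA Ω) :=
  helicity_well_defined_general d1 δ2 starA starB n2 inner1 inner2 green hsd ω Ω Ωt hΩ hn hΩt
end

section
/- Let (M̄, g) be an oriented, compact Riemannian 3-manifold with boundary. Then 𝓥_n(M̄) ⊆ 𝓥_P(M̄): every smooth vector field admitting a smooth vector potential normal to the boundary is divergence-free and tangent to the boundary. Moreover, 𝓥_n(M̄) = 𝓥_P(M̄) if and only if the first de Rham cohomology of M̄ vanishes: H¹_dR(M̄) = {0}. -/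
/-!
Divergence-free fields with normal potentials: `δδ = 0` and the boundary duality give
`𝓥_n ⊆ 𝓥_P`. A field lying in both `𝓥_n` and `𝓗¹_N` is `L²`-orthogonal to itself by
Green's formula, hence zero. So if `𝓥_n = 𝓥_P`, the harmonic Neumann part of every closed
1-form vanishes and the form is exact; conversely, if `H¹_dR(M̄) = 0` then `𝓗¹_N = 0`, and the
Hodge–Morrey decomposition of an element of `𝓥_P` has no harmonic part, so it lies in `𝓥_n`.
-/

section DeRhamData

variable {R Ω0 Ω1 Ω2 bΩ1 bΩ2 : Type*} [CommSemiring R]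
  [AddCommMonoid Ω0] [Module R Ω0] [AddCommMonoid Ω1] [Module R Ω1]
  [AddCommMonoid Ω2] [Module R Ω2] [AddCommMonoid bΩ1] [Module R bΩ1]
  [AddCommMonoid bΩ2] [Module R bΩ2]

/-- The metric duals of the fields in `𝓥_n(M̄)`: `(curl A)♭ = ±δΩ` with `Ω = ⋆A♭`,
and `A^∥ = 0` becomes `n(Ω) = 0`. -/
def coexactNormalForms (δ2 : Ω2 →ₗ[R] Ω1) (n2 : Ω2 →ₗ[R] bΩ2) : Set Ω1 :=
  {ω | ∃ Ω, δ2 Ω = ω ∧ n2 Ω = 0}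

/-- The metric duals of the fields in `𝓥_P(M̄)`. -/
def coclosedNormalForms (δ1 : Ω1 →ₗ[R] Ω0) (n1 : Ω1 →ₗ[R] bΩ1) : Set Ω1 :=
  {ω | δ1 ω = 0 ∧ n1 ω = 0}

theorem coexactNormalForms_subset_coclosedNormalForms
    (δ1 : Ω1 →ₗ[R] Ω0) (δ2 : Ω2 →ₗ[R] Ω1) (n1 : Ω1 →ₗ[R] bΩ1) (n2 : Ω2 →ₗ[R] bΩ2)
    (hδδ : ∀ Ω, δ1 (δ2 Ω) = 0) (hnδ : ∀ Ω, n2 Ω = 0 → n1 (δ2 Ω) = 0) :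
    coexactNormalForms δ2 n2 ⊆ coclosedNormalForms δ1 n1 := by
  rintro _ ⟨Ω, rfl, hnΩ⟩
  exact ⟨hδδ Ω, hnδ Ω hnΩ⟩

theorem eq_zero_of_mem_coexactNormalForms_of_closed
    (d1 : Ω1 →ₗ[R] Ω2) (δ2 : Ω2 →ₗ[R] Ω1) (n2 : Ω2 →ₗ[R] bΩ2)
    (inner1 : Ω1 →ₗ[R] Ω1 →ₗ[R] R) (posdef : ∀ α, inner1 α α = 0 → α = 0)
    (green : ∀ Ω γ, n2 Ω = 0 → d1 γ = 0 → inner1 (δ2 Ω) γ = 0)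
    {γ : Ω1} (hγ : γ ∈ coexactNormalForms δ2 n2) (hdγ : d1 γ = 0) : γ = 0 := by
  obtain ⟨Ω, rfl, hnΩ⟩ := hγ
  exact posdef _ (green Ω _ hnΩ hdγ)

theorem exists_eq_d_of_coexactNormalForms_eq
    (d0 : Ω0 →ₗ[R] Ω1) (d1 : Ω1 →ₗ[R] Ω2) (δ1 : Ω1 →ₗ[R] Ω0) (δ2 : Ω2 →ₗ[R] Ω1)
    (n1 : Ω1 →ₗ[R] bΩ1) (n2 : Ω2 →ₗ[R] bΩ2) (inner1 : Ω1 →ₗ[R] Ω1 →ₗ[R] R)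
    (posdef : ∀ α, inner1 α α = 0 → α = 0)
    (green : ∀ Ω γ, n2 Ω = 0 → d1 γ = 0 → inner1 (δ2 Ω) γ = 0)
    (hHNrep : ∀ ω, d1 ω = 0 → ∃ f γ, ω = d0 f + γ ∧ d1 γ = 0 ∧ δ1 γ = 0 ∧ n1 γ = 0)
    (heq : coexactNormalForms δ2 n2 = coclosedNormalForms δ1 n1)
    {ω : Ω1} (hdω : d1 ω = 0) : ∃ f, d0 f = ω := by
  obtain ⟨f, γ, rfl, hdγ, hδγ, hnγ⟩ := hHNrep ω hdω
  have hγ : γ ∈ coexactNormalForms δ2 n2 := heq ▸ ⟨hδγ, hnγ⟩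
  rw [eq_zero_of_mem_coexactNormalForms_of_closed d1 δ2 n2 inner1 posdef green hγ hdγ, add_zero]
  exact ⟨f, rfl⟩

theorem coclosedNormalForms_subset_coexactNormalForms
    (d0 : Ω0 →ₗ[R] Ω1) (d1 : Ω1 →ₗ[R] Ω2) (δ1 : Ω1 →ₗ[R] Ω0) (δ2 : Ω2 →ₗ[R] Ω1)
    (n1 : Ω1 →ₗ[R] bΩ1) (n2 : Ω2 →ₗ[R] bΩ2)
    (hodgeMorrey : ∀ ω, δ1 ω = 0 → n1 ω = 0 →
      ∃ β γ, ω = δ2 β + γ ∧ n2 β = 0 ∧ d1 γ = 0 ∧ δ1 γ = 0 ∧ n1 γ = 0)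
    (hHN : ∀ γ, d1 γ = 0 → δ1 γ = 0 → n1 γ = 0 → (∃ f, d0 f = γ) → γ = 0)
    (hH1 : ∀ ω, d1 ω = 0 → ∃ f, d0 f = ω) :
    coclosedNormalForms δ1 n1 ⊆ coexactNormalForms δ2 n2 := by
  rintro ω ⟨hδω, hnω⟩
  obtain ⟨β, γ, rfl, hnβ, hdγ, hδγ, hnγ⟩ := hodgeMorrey ω hδω hnω
  rw [hHN γ hdγ hδγ hnγ (hH1 γ hdγ), add_zero]
  exact ⟨β, rfl, hnβ⟩

end DeRhamData

/-- `𝓥_n ⊆ 𝓥_P`, with equality iff `H¹_dR(M̄) = 0`.  Working (as in the paper) with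
the metric-dual 1-forms, `𝓥_n` corresponds to `{ω | ω = δΩ, n(Ω) = 0}` and `𝓥_P` to
`{ω | δω = 0, n(ω) = 0}`; `H¹_dR(M̄) = 0` means every closed 1-form is exact.  The
de Rham data of an oriented compact Riemannian 3-manifold with boundary is
axiomatised, including `δδ = 0`, the duality `n(Ω)=0 → n(δΩ)=0`, positive
definiteness of the L² product, Green's formula, the Hodge–Morrey decomposition of
divergence-free normal-free 1-forms, and the isomorphism `H¹_dR(M̄) ≅ 𝓗¹_N(M̄)`
(injectivity `hHN` and surjectivity `hHNrep` of harmonic Neumann representatives). -/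
theorem Vn_subset_VP_and_eq_iff_H1_trivial {Ω0 Ω1 Ω2 bΩ1 bΩ2 : Type*}
    [AddCommGroup Ω0] [Module ℝ Ω0] [AddCommGroup Ω1] [Module ℝ Ω1]
    [AddCommGroup Ω2] [Module ℝ Ω2] [AddCommGroup bΩ1] [Module ℝ bΩ1]
    [AddCommGroup bΩ2] [Module ℝ bΩ2]
    (d0 : Ω0 →ₗ[ℝ] Ω1) (d1 : Ω1 →ₗ[ℝ] Ω2) (δ1 : Ω1 →ₗ[ℝ] Ω0) (δ2 : Ω2 →ₗ[ℝ] Ω1)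
    (n1 : Ω1 →ₗ[ℝ] bΩ1) (n2 : Ω2 →ₗ[ℝ] bΩ2)
    (inner1 : Ω1 →ₗ[ℝ] Ω1 →ₗ[ℝ] ℝ)
    (hδδ : ∀ Ω : Ω2, δ1 (δ2 Ω) = 0)
    (hnδ : ∀ Ω : Ω2, n2 Ω = 0 → n1 (δ2 Ω) = 0)
    (posdef : ∀ α : Ω1, inner1 α α = 0 → α = 0)
    (green : ∀ (Ω : Ω2) (γ : Ω1), n2 Ω = 0 → d1 γ = 0 → inner1 (δ2 Ω) γ = 0)
    (hodgeMorrey : ∀ ω : Ω1, δ1 ω = 0 → n1 ω = 0 →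
      ∃ (β : Ω2) (γ : Ω1), ω = δ2 β + γ ∧ n2 β = 0 ∧ d1 γ = 0 ∧ δ1 γ = 0 ∧ n1 γ = 0)
    (hHN : ∀ γ : Ω1, d1 γ = 0 → δ1 γ = 0 → n1 γ = 0 → (∃ f : Ω0, d0 f = γ) → γ = 0)
    (hHNrep : ∀ ω : Ω1, d1 ω = 0 →
      ∃ (f : Ω0) (γ : Ω1), ω = d0 f + γ ∧ d1 γ = 0 ∧ δ1 γ = 0 ∧ n1 γ = 0) :
    ({ω : Ω1 | ∃ Ω : Ω2, δ2 Ω = ω ∧ n2 Ω = 0} ⊆ {ω : Ω1 | δ1 ω = 0 ∧ n1 ω = 0}) ∧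
    ({ω : Ω1 | ∃ Ω : Ω2, δ2 Ω = ω ∧ n2 Ω = 0} = {ω : Ω1 | δ1 ω = 0 ∧ n1 ω = 0} ↔
      ∀ ω : Ω1, d1 ω = 0 → ∃ f : Ω0, d0 f = ω) := by
  have hsub := coexactNormalForms_subset_coclosedNormalForms δ1 δ2 n1 n2 hδδ hnδ
  refine ⟨hsub, fun heq _ hdω ↦ ?_, fun hH1 ↦ ?_⟩
  · exact exists_eq_d_of_coexactNormalForms_eq d0 d1 δ1 δ2 n1 n2 inner1 posdef green hHNrep
      heq hdω
  · exact hsub.antisymm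
      (coclosedNormalForms_subset_coexactNormalForms d0 d1 δ1 δ2 n1 n2 hodgeMorrey hHN hH1)
end
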